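/- arXiv:2507.20167 — 2 statements merged into one kernel-verified Lean document; each statement's English description precedes it below -/
import Mathlib

section
/- For all integers m ≥ l ≥ 0, every integer n ≥ 0 and every real x: (1/2^l)·Σ_{j=0}^{l} C(l,j)·E^{(m)}_{n,λ}(x+j) = E^{(m−l)}_{n,λ}(x). (The left-hand side is the expectation E[E^{(m)}_{n,λ}(x + Y^{(l)})], where Y^{(l)} is the sum of l independent Bernoulli random variables with success probability 1/2, i.e. a Binomial(l,1/2) random variable.) -/
open Finset PowerSeries

noncomputable def dff (lam x : ℝ) (n : ℕ) : ℝ := ∏ i ∈ Finset.range n, (x - i * lam)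

noncomputable def degExp (lam x : ℝ) : PowerSeries ℝ :=
  PowerSeries.mk fun k => dff lam x k / k.factorial

/-!
The degenerate exponential satisfies `e_λ^{x+y}(t) = e_λ^x(t) e_λ^y(t)` (a binomial theorem for
degenerate falling factorials), so `e_λ^{x+j}(t) = e_λ^x(t) e_λ(t)^j`. Multiplying the generating
function of `Σ_j C(l,j) E^{(m)}_{n,λ}(x+j)` by `(e_λ(t)+1)^m` therefore gives
`2^m e_λ^x(t) (e_λ(t)+1)^l`, which is `2^l (e_λ(t)+1)^l` times the defining identity of
`E^{(m-l)}_{n,λ}(x)`; the factor `(e_λ(t)+1)^m` has constant term `2^m` and cancels.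
-/

open Nat in
theorem PowerSeries.mk_div_factorial_mul_mk_div_factorial {K : Type*} [Field K] [CharZero K]
    (a b : ℕ → K) :
    (mk fun n => a n / n !) * (mk fun n => b n / n !)
      = mk fun n => (∑ p ∈ antidiagonal n, (n.choose p.1 : K) * a p.1 * b p.2) / n ! := by
  ext n
  simp only [coeff_mul, coeff_mk, sum_div]
  refine sum_congr rfl fun p hp => ?_
  obtain ⟨i, j⟩ := p
  obtain rfl : i + j = n := mem_antidiagonal.mp hp
  have h := Nat.choose_mul_factorial_mul_factorial (Nat.le_add_right i j)
  rw [Nat.add_sub_cancel_left] at h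
  have hc : ((i + j).choose i : K) ≠ 0 := Nat.cast_ne_zero.mpr (Nat.choose_pos (by omega)).ne'
  rw [← h]
  push_cast
  field_simp

theorem dff_succ (lam x : ℝ) (n : ℕ) : dff lam x (n + 1) = dff lam x n * (x - n * lam) :=
  prod_range_succ _ n

theorem dff_add (lam x y : ℝ) (n : ℕ) :
    dff lam (x + y) n
      = ∑ p ∈ antidiagonal n, (n.choose p.1 : ℝ) * dff lam x p.1 * dff lam y p.2 := by
  induction n with
  | zero => simp [dff]
  | succ n ih =>
    simp_rw [mul_assoc, sum_antidiagonal_choose_succ_mul (fun i j => dff lam x i * dff lam y j),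
      ← sum_add_distrib, dff_succ, ih, sum_mul]
    refine sum_congr rfl fun p hp => ?_
    have hn : (n : ℝ) = p.1 + p.2 := by exact_mod_cast (mem_antidiagonal.mp hp).symm
    rw [Nat.choose_symm_of_eq_add (mem_antidiagonal.mp hp).symm, hn]
    ring

theorem degExp_add (lam x y : ℝ) : degExp lam (x + y) = degExp lam x * degExp lam y := by
  simp only [degExp, mk_div_factorial_mul_mk_div_factorial, dff_add]

theorem degExp_zero (lam : ℝ) : degExp lam 0 = 1 := by
  ext n
  cases n <;> simp [degExp, dff, prod_range_succ', coeff_one]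

theorem degExp_natCast (lam : ℝ) (j : ℕ) : degExp lam j = degExp lam 1 ^ j := by
  induction j with
  | zero => simpa using degExp_zero lam
  | succ j ih => rw [Nat.cast_succ, degExp_add, ih, pow_succ]

theorem constantCoeff_degExp (lam x : ℝ) : constantCoeff (degExp lam x) = 1 := by
  simp [degExp, dff]

theorem degExp_one_add_one_ne_zero (lam : ℝ) : degExp lam 1 + 1 ≠ 0 := fun h => by
  simpa [constantCoeff_degExp] using congrArg constantCoeff h

theorem sum_choose_smul_mk_add_natCast {lam : ℝ} {E : ℕ → ℝ → ℕ → ℝ}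
    (hE : ∀ m x, (PowerSeries.mk fun n => E m x n / n.factorial) * (degExp lam 1 + 1) ^ m
        = (2 : PowerSeries ℝ) ^ m * degExp lam x)
    {m l : ℕ} (hml : l ≤ m) (x : ℝ) :
    ∑ j ∈ range (l + 1), (l.choose j : ℝ) • (mk fun n => E m (x + j) n / n.factorial)
      = (2 : ℝ) ^ l • mk fun n => E (m - l) x n / n.factorial := by
  refine mul_right_cancel₀ (pow_ne_zero m (degExp_one_add_one_ne_zero lam)) ?_
  obtain ⟨k, rfl⟩ := Nat.exists_eq_add_of_le hml
  calc (∑ j ∈ range (l + 1), (l.choose j : ℝ) • (mk fun n => E (l + k) (x + j) n / n.factorial))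
        * (degExp lam 1 + 1) ^ (l + k)
      = 2 ^ (l + k) * degExp lam x * (degExp lam 1 + 1) ^ l := by
        simp_rw [sum_mul, smul_mul_assoc, hE, degExp_add, degExp_natCast, add_pow, mul_sum,
          Nat.cast_smul_eq_nsmul, nsmul_eq_mul]
        refine sum_congr rfl fun j _ => ?_
        ring
    _ = ((2 : ℝ) ^ l • mk fun n => E (l + k - l) x n / n.factorial)
          * (degExp lam 1 + 1) ^ (l + k) := by
        rw [Nat.add_sub_cancel_left, Algebra.smul_def, map_pow, map_ofNat]
        linear_combination (-(2 ^ l * (degExp lam 1 + 1) ^ l)) * hE k x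

theorem stmt15_general (lam : ℝ)
    (E : ℕ → ℝ → ℕ → ℝ)
    (hE : ∀ m x, (PowerSeries.mk fun n => E m x n / n.factorial) * (degExp lam 1 + 1) ^ m
        = (2 : PowerSeries ℝ) ^ m * degExp lam x)
    (m l : ℕ) (hml : l ≤ m) (n : ℕ) (x : ℝ) :
    (1 / 2 ^ l) * ∑ j ∈ Finset.range (l + 1), (l.choose j : ℝ) * E m (x + j) n
      = E (m - l) x n := by
  have h := congrArg (coeff n) (sum_choose_smul_mk_add_natCast hE hml x)
  simp only [map_sum, coeff_smul, coeff_mk, smul_eq_mul, mul_div_assoc', ← sum_div] at h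
  field_simp at h ⊢
  exact h

theorem stmt15 (lam : ℝ) (hlam : lam ≠ 0)
    (E : ℕ → ℝ → ℕ → ℝ)
    (hE : ∀ m x, (PowerSeries.mk fun n => E m x n / n.factorial) * (degExp lam 1 + 1) ^ m
        = (2 : PowerSeries ℝ) ^ m * degExp lam x)
    (m l : ℕ) (hml : l ≤ m) (n : ℕ) (x : ℝ) :
    (1 / 2 ^ l) * ∑ j ∈ Finset.range (l + 1), (l.choose j : ℝ) * E m (x + j) n
      = E (m - l) x n :=
  stmt15_general lam E hE m l hml n x
end

section
/- For all integers a ≥ 1, b ≥ 1, every integer n ≥ 0 and all real x, y: Σ_{k=0}^{n} C(n,k)·β^{(a)}_{k,λ}(x)·E^{(b−1)}_{n−k,λ}(y) = Σ_{k=0}^{n} C(n,k)·[β^{(a)}_{k,λ}(x) + (k/2)·β^{(a−1)}_{k−1,λ}(x)]·E^{(b)}_{n−k,λ}(y), where the term (k/2)·β^{(a−1)}_{k−1,λ}(x) is interpreted as 0 when k = 0. -/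
open Finset PowerSeries

/-!
Write `β_m`, `ε_m` for the exponential generating functions of `B m x` and `E m y`. Cancelling
powers of `e_λ(t) ∓ 1` in consecutive defining identities gives `β_{a+1} (e_λ(t) - 1) = t β_a`
and `ε_{b+1} (e_λ(t) + 1) = 2 ε_b`. Hence
`2 β_{a+1} ε_b = β_{a+1} ε_{b+1} (e_λ(t) + 1) = (2 β_{a+1} + t β_a) ε_{b+1}`,
and comparing coefficients of `tⁿ / n!` is the claimed identity.
-/

section Cancel

variable {R : Type*} [CommRing R] [NoZeroDivisors R]

theorem mul_eq_mul_of_forall_mul_pow_eq {u c g : R} (hu : u ≠ 0) (f : ℕ → R)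
    (h : ∀ m, f m * u ^ m = c ^ m * g) (m : ℕ) : f (m + 1) * u = c * f m := by
  apply mul_right_cancel₀ (pow_ne_zero m hu)
  calc f (m + 1) * u * u ^ m = c ^ (m + 1) * g := by rw [← h, pow_succ']; ring
    _ = c * (f m * u ^ m) := by rw [h]; ring
    _ = c * f m * u ^ m := by ring

end Cancel

section ExpGenFun

variable {K : Type*} [Field K] [CharZero K]

noncomputable def egf (f : ℕ → K) : K⟦X⟧ :=
  PowerSeries.mk fun n => f n / n.factorial

theorem factorial_mul_coeff_egf_mul (f g : ℕ → K) (n : ℕ) :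
    n.factorial * coeff n (egf f * egf g)
      = ∑ k ∈ range (n + 1), (n.choose k : K) * f k * g (n - k) := by
  rw [coeff_mul, Nat.sum_antidiagonal_eq_sum_range_succ_mk, mul_sum]
  refine sum_congr rfl fun k hk => ?_
  rw [mem_range, Nat.lt_succ_iff] at hk
  simp only [egf, coeff_mk, Nat.cast_choose K hk]
  have : (k.factorial : K) ≠ 0 := Nat.cast_ne_zero.mpr k.factorial_ne_zero
  have : ((n - k).factorial : K) ≠ 0 := Nat.cast_ne_zero.mpr (n - k).factorial_ne_zero
  field_simp

theorem X_mul_egf (f : ℕ → K) : X * egf f = egf fun k => k * f (k - 1) := by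
  ext (_ | k)
  · simp [egf]
  · have : (k.factorial : K) ≠ 0 := Nat.cast_ne_zero.mpr k.factorial_ne_zero
    simp only [egf, coeff_succ_X_mul, coeff_mk, Nat.factorial_succ, Nat.add_sub_cancel]
    push_cast
    field_simp

theorem egf_mul_eq_of_recurrences {f f' g g' : ℕ → K} {e : K⟦X⟧}
    (hf : egf f' * (e - 1) = X * egf f) (hg : egf g' * (e + 1) = 2 * egf g) :
    egf f' * egf g = egf (fun k => f' k + k / 2 * f (k - 1)) * egf g' := by
  have hsplit : egf (fun k => f' k + k / 2 * f (k - 1)) = egf f' + C (1 / 2 : K) * (X * egf f) := by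
    rw [X_mul_egf]
    ext k
    simp only [egf, coeff_mk, map_add, coeff_C_mul]
    ring
  have hhalf : (2 : K⟦X⟧) * C (1 / 2 : K) = 1 := by
    rw [← map_ofNat (C (R := K)) 2, ← map_mul]
    norm_num
  rw [hsplit]
  linear_combination C (1 / 2 : K) * egf g' * hf - C (1 / 2 : K) * egf f' * hg
    + (egf f' * egf g' - egf f' * egf g) * hhalf

end ExpGenFun

theorem coeff_zero_degExp (lam x : ℝ) : coeff 0 (degExp lam x) = 1 := by
  simp [degExp, dff]

theorem coeff_one_degExp (lam x : ℝ) : coeff 1 (degExp lam x) = x := by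
  simp [degExp, dff]

theorem degExp_sub_one_ne_zero (lam : ℝ) {x : ℝ} (hx : x ≠ 0) : degExp lam x - 1 ≠ 0 := by
  intro h
  simpa [coeff_one_degExp, hx] using congrArg (coeff 1) h

theorem degExp_add_one_ne_zero (lam x : ℝ) : degExp lam x + 1 ≠ 0 := by
  intro h
  have := congrArg (coeff 0) h
  rw [map_add, coeff_zero_degExp, coeff_zero_one, map_zero] at this
  norm_num at this

theorem stmt18_general (lam : ℝ)
    (B E : ℕ → ℝ → ℕ → ℝ)
    (hB : ∀ m x, (PowerSeries.mk fun n => B m x n / n.factorial) * (degExp lam 1 - 1) ^ m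
        = (PowerSeries.X : PowerSeries ℝ) ^ m * degExp lam x)
    (hE : ∀ m x, (PowerSeries.mk fun n => E m x n / n.factorial) * (degExp lam 1 + 1) ^ m
        = (2 : PowerSeries ℝ) ^ m * degExp lam x)
    (a b : ℕ) (ha : 1 ≤ a) (hb : 1 ≤ b) (n : ℕ) (x y : ℝ) :
    ∑ k ∈ Finset.range (n + 1), (n.choose k : ℝ) * B a x k * E (b - 1) y (n - k)
    = ∑ k ∈ Finset.range (n + 1), (n.choose k : ℝ)
        * (B a x k + (k : ℝ) / 2 * B (a - 1) x (k - 1)) * E b y (n - k) := by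
  obtain ⟨a, rfl⟩ := Nat.exists_eq_add_of_le' ha
  obtain ⟨b, rfl⟩ := Nat.exists_eq_add_of_le' hb
  simp only [Nat.add_sub_cancel]
  have hBrec := mul_eq_mul_of_forall_mul_pow_eq (degExp_sub_one_ne_zero lam one_ne_zero)
    (fun m => egf (B m x)) (hB · x) a
  have hErec := mul_eq_mul_of_forall_mul_pow_eq (degExp_add_one_ne_zero lam 1)
    (fun m => egf (E m y)) (hE · y) b
  have key := congrArg (fun p => (n.factorial : ℝ) * coeff n p)
    (egf_mul_eq_of_recurrences hBrec hErec)
  simpa only [factorial_mul_coeff_egf_mul] using key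

theorem stmt18 (lam : ℝ) (hlam : lam ≠ 0)
    (B E : ℕ → ℝ → ℕ → ℝ)
    (hB : ∀ m x, (PowerSeries.mk fun n => B m x n / n.factorial) * (degExp lam 1 - 1) ^ m
        = (PowerSeries.X : PowerSeries ℝ) ^ m * degExp lam x)
    (hE : ∀ m x, (PowerSeries.mk fun n => E m x n / n.factorial) * (degExp lam 1 + 1) ^ m
        = (2 : PowerSeries ℝ) ^ m * degExp lam x)
    (a b : ℕ) (ha : 1 ≤ a) (hb : 1 ≤ b) (n : ℕ) (x y : ℝ) :
    ∑ k ∈ Finset.range (n + 1), (n.choose k : ℝ) * B a x k * E (b - 1) y (n - k)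
    = ∑ k ∈ Finset.range (n + 1), (n.choose k : ℝ)
        * (B a x k + (k : ℝ) / 2 * B (a - 1) x (k - 1)) * E b y (n - k) :=
  stmt18_general lam B E hB hE a b ha hb n x y
end
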